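/- arXiv:1711.07544 — 2 statements merged into one kernel-verified Lean document; each statement's English description precedes it below -/
import Mathlib

section
/- Let f : ℝ^m → ℝ^p and g : ℝⁿ → ℝ^k, m ≥ p > 0, n ≥ k > 0, be real-analytic maps with f(0)=0 and g(0)=0, in separate variables, and suppose that both f and g are nice. Then the product map G := (f,g) : ℝ^m × ℝⁿ → ℝ^p × ℝ^k, G(x,y) = (f(x), g(y)), is nice. -/
open Metric Set Function

noncomputable section

/-- The singular set of a differentiable map between real normed spaces. -/
def singSet {E F : Type*} [NormedAddCommGroup E] [NormedSpace ℝ E]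
    [NormedAddCommGroup F] [NormedSpace ℝ F] (G : E → F) : Set E :=
  {x | ¬ Function.Surjective (fderiv ℝ G x)}

/-- The Euclidean ball of radius `r` centred at the origin of a product space
(Euclidean product structure). -/
def pball {E F : Type*} [NormedAddCommGroup E] [NormedAddCommGroup F] (r : ℝ) :
    Set (E × F) :=
  {q | ‖q.1‖ ^ 2 + ‖q.2‖ ^ 2 < r ^ 2}

/-- `G` is a nice map germ (single factor version, with round balls). -/
def IsNice {m p : ℕ} (G : EuclideanSpace ℝ (Fin m) → EuclideanSpace ℝ (Fin p)) : Prop :=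
  ∃ ρ₀ > (0 : ℝ), ∀ ε ε' : ℝ, 0 < ε → ε < ρ₀ → 0 < ε' → ε' < ρ₀ → ∃ δ > (0 : ℝ),
    G '' ball 0 ε ∩ ball 0 δ = G '' ball 0 ε' ∩ ball 0 δ ∧
    G '' (ball 0 ε ∩ singSet G) ∩ ball 0 δ = G '' (ball 0 ε' ∩ singSet G) ∩ ball 0 δ

/-- `G` is a nice map germ (product version, with Euclidean balls on the products). -/
def IsNiceProd {m n p k : ℕ}
    (G : EuclideanSpace ℝ (Fin m) × EuclideanSpace ℝ (Fin n) →
         EuclideanSpace ℝ (Fin p) × EuclideanSpace ℝ (Fin k)) : Prop :=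
  ∃ ρ₀ > (0 : ℝ), ∀ ε ε' : ℝ, 0 < ε → ε < ρ₀ → 0 < ε' → ε' < ρ₀ → ∃ δ > (0 : ℝ),
    G '' pball ε ∩ pball δ = G '' pball ε' ∩ pball δ ∧
    G '' (pball ε ∩ singSet G) ∩ pball δ = G '' (pball ε' ∩ singSet G) ∩ pball δ

/- ### Auxiliary lemmas -/

private lemma aux_pull {α β : Type*} {f : α → β} {A B : Set α} {D : Set β}
    (h : f '' A ∩ D = f '' B ∩ D) {u : β} (hu : u ∈ f '' A) (hud : u ∈ D) :
    ∃ x ∈ B, f x = u := by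
  have : u ∈ f '' B ∩ D := h ▸ ⟨hu, hud⟩
  exact this.1

private lemma aux_fst {a b r : ℝ} (ha : 0 ≤ a) (hb : 0 ≤ b) (hr : 0 < r)
    (h : a ^ 2 + b ^ 2 < r ^ 2) : a < r := by nlinarith

private lemma aux_sum {a b r : ℝ} (hr : 0 < r) (ha : a < r / Real.sqrt 2)
    (hb : b < r / Real.sqrt 2) (ha0 : 0 ≤ a) (hb0 : 0 ≤ b) :
    a ^ 2 + b ^ 2 < r ^ 2 := by
  have h2 : (Real.sqrt 2) ^ 2 = 2 := Real.sq_sqrt (by norm_num)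
  have h2' : (0 : ℝ) < Real.sqrt 2 := Real.sqrt_pos.2 (by norm_num)
  have hrr : (r / Real.sqrt 2) ^ 2 = r ^ 2 / 2 := by
    rw [div_pow, h2]
  nlinarith [sq_nonneg (a - b)]

private lemma aux_half_pos {r : ℝ} (hr : 0 < r) : 0 < r / Real.sqrt 2 :=
  div_pos hr (Real.sqrt_pos.2 (by norm_num))

private lemma aux_half_lt {r : ℝ} (hr : 0 < r) : r / Real.sqrt 2 < r := by
  have h2' : (1 : ℝ) < Real.sqrt 2 := by
    have := Real.sqrt_lt_sqrt (by norm_num : (0:ℝ) ≤ 1) (by norm_num : (1:ℝ) < 2)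
    simpa using this
  calc r / Real.sqrt 2 < r / 1 := by
        apply div_lt_div_of_pos_left hr one_pos h2'
    _ = r := div_one r

private lemma surj_prodMap {E F E' F' : Type*}
    [NormedAddCommGroup E] [NormedSpace ℝ E] [NormedAddCommGroup F] [NormedSpace ℝ F]
    [NormedAddCommGroup E'] [NormedSpace ℝ E'] [NormedAddCommGroup F'] [NormedSpace ℝ F']
    (A : E →L[ℝ] E') (B : F →L[ℝ] F') :
    Function.Surjective (A.prodMap B) ↔ Function.Surjective A ∧ Function.Surjective B := by
  constructor
  · intro h
    constructor
    · intro a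
      obtain ⟨u, hu⟩ := h (a, B 0)
      exact ⟨u.1, congrArg Prod.fst hu⟩
    · intro b
      obtain ⟨u, hu⟩ := h (A 0, b)
      exact ⟨u.2, congrArg Prod.snd hu⟩
  · rintro ⟨hA, hB⟩ ⟨a, b⟩
    obtain ⟨u, hu⟩ := hA a
    obtain ⟨v, hv⟩ := hB b
    exact ⟨(u, v), by simp [ContinuousLinearMap.coe_prodMap, Prod.map, hu, hv]⟩

/-- Characterization of the singular set of a product map. -/
private lemma singSet_prod {m n p k : ℕ}
    {f : EuclideanSpace ℝ (Fin m) → EuclideanSpace ℝ (Fin p)}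
    {g : EuclideanSpace ℝ (Fin n) → EuclideanSpace ℝ (Fin k)}
    (hf : ∀ x, DifferentiableAt ℝ f x) (hg : ∀ y, DifferentiableAt ℝ g y)
    (q : EuclideanSpace ℝ (Fin m) × EuclideanSpace ℝ (Fin n)) :
    q ∈ singSet (fun q => (f q.1, g q.2)) ↔ q.1 ∈ singSet f ∨ q.2 ∈ singSet g := by
  have hG : HasFDerivAt (fun q : EuclideanSpace ℝ (Fin m) × EuclideanSpace ℝ (Fin n) =>
      (f q.1, g q.2)) ((fderiv ℝ f q.1).prodMap (fderiv ℝ g q.2)) q :=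
    HasFDerivAt.prodMap q (hf q.1).hasFDerivAt (hg q.2).hasFDerivAt
  have h := hG.fderiv
  simp only [singSet, mem_setOf_eq, h, surj_prodMap]
  tauto

/-- One inclusion for the plain images. -/
private lemma incl_plain {m n p k : ℕ}
    {f : EuclideanSpace ℝ (Fin m) → EuclideanSpace ℝ (Fin p)}
    {g : EuclideanSpace ℝ (Fin n) → EuclideanSpace ℝ (Fin k)}
    {ε b δ : ℝ} (hε0 : 0 < ε) (hδ : 0 < δ) (hb : 0 < b)
    (Hf : ∀ x : EuclideanSpace ℝ (Fin m), ‖x‖ < ε → ‖f x‖ < δ →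
      ∃ x', ‖x'‖ < b / Real.sqrt 2 ∧ f x' = f x)
    (Hg : ∀ y : EuclideanSpace ℝ (Fin n), ‖y‖ < ε → ‖g y‖ < δ →
      ∃ y', ‖y'‖ < b / Real.sqrt 2 ∧ g y' = g y) :
    (fun q : EuclideanSpace ℝ (Fin m) × EuclideanSpace ℝ (Fin n) => (f q.1, g q.2)) '' pball ε
        ∩ pball δ ⊆
      (fun q : EuclideanSpace ℝ (Fin m) × EuclideanSpace ℝ (Fin n) => (f q.1, g q.2)) '' pball b
        ∩ pball δ := by
  rintro u ⟨⟨⟨x, y⟩, hxy, rfl⟩, hud⟩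
  simp only [pball, mem_setOf_eq] at hxy hud ⊢
  have hx : ‖x‖ < ε := aux_fst (norm_nonneg x) (norm_nonneg y) hε0 hxy
  have hy : ‖y‖ < ε := aux_fst (norm_nonneg y) (norm_nonneg x) hε0 (by linarith)
  have hfx : ‖f x‖ < δ := aux_fst (norm_nonneg _) (norm_nonneg _) hδ hud
  have hgy : ‖g y‖ < δ := aux_fst (norm_nonneg (g y)) (norm_nonneg (f x)) hδ (by linarith)
  obtain ⟨x', hx', hfx'⟩ := Hf x hx hfx
  obtain ⟨y', hy', hgy'⟩ := Hg y hy hgy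
  refine ⟨⟨(x', y'), ?_, ?_⟩, hud⟩
  · exact aux_sum hb hx' hy' (norm_nonneg _) (norm_nonneg _)
  · simp [hfx', hgy']

/-- One inclusion for the images of the singular sets. -/
private lemma incl_sing {m n p k : ℕ}
    {f : EuclideanSpace ℝ (Fin m) → EuclideanSpace ℝ (Fin p)}
    {g : EuclideanSpace ℝ (Fin n) → EuclideanSpace ℝ (Fin k)}
    {Sf : Set (EuclideanSpace ℝ (Fin m))} {Sg : Set (EuclideanSpace ℝ (Fin n))}
    {S : Set (EuclideanSpace ℝ (Fin m) × EuclideanSpace ℝ (Fin n))}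
    (hS : ∀ q, q ∈ S ↔ q.1 ∈ Sf ∨ q.2 ∈ Sg)
    {ε b δ : ℝ} (hε0 : 0 < ε) (hδ : 0 < δ) (hb : 0 < b)
    (Hf : ∀ x : EuclideanSpace ℝ (Fin m), ‖x‖ < ε → ‖f x‖ < δ →
      ∃ x', ‖x'‖ < b / Real.sqrt 2 ∧ f x' = f x)
    (Hg : ∀ y : EuclideanSpace ℝ (Fin n), ‖y‖ < ε → ‖g y‖ < δ →
      ∃ y', ‖y'‖ < b / Real.sqrt 2 ∧ g y' = g y)
    (Hfs : ∀ x : EuclideanSpace ℝ (Fin m), ‖x‖ < ε → x ∈ Sf → ‖f x‖ < δ →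
      ∃ x', ‖x'‖ < b / Real.sqrt 2 ∧ x' ∈ Sf ∧ f x' = f x)
    (Hgs : ∀ y : EuclideanSpace ℝ (Fin n), ‖y‖ < ε → y ∈ Sg → ‖g y‖ < δ →
      ∃ y', ‖y'‖ < b / Real.sqrt 2 ∧ y' ∈ Sg ∧ g y' = g y) :
    (fun q : EuclideanSpace ℝ (Fin m) × EuclideanSpace ℝ (Fin n) => (f q.1, g q.2)) ''
        (pball ε ∩ S) ∩ pball δ ⊆
      (fun q : EuclideanSpace ℝ (Fin m) × EuclideanSpace ℝ (Fin n) => (f q.1, g q.2)) ''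
        (pball b ∩ S) ∩ pball δ := by
  rintro u ⟨⟨⟨x, y⟩, ⟨hxy, hxyS⟩, rfl⟩, hud⟩
  simp only [pball, mem_setOf_eq] at hxy hud ⊢
  have hx : ‖x‖ < ε := aux_fst (norm_nonneg x) (norm_nonneg y) hε0 hxy
  have hy : ‖y‖ < ε := aux_fst (norm_nonneg y) (norm_nonneg x) hε0 (by linarith)
  have hfx : ‖f x‖ < δ := aux_fst (norm_nonneg _) (norm_nonneg _) hδ hud
  have hgy : ‖g y‖ < δ := aux_fst (norm_nonneg (g y)) (norm_nonneg (f x)) hδ (by linarith)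
  rcases (hS (x, y)).1 hxyS with hxS | hyS
  · obtain ⟨x', hx', hxS', hfx'⟩ := Hfs x hx hxS hfx
    obtain ⟨y', hy', hgy'⟩ := Hg y hy hgy
    refine ⟨⟨(x', y'), ⟨?_, (hS (x', y')).2 (Or.inl hxS')⟩, ?_⟩, hud⟩
    · exact aux_sum hb hx' hy' (norm_nonneg _) (norm_nonneg _)
    · simp [hfx', hgy']
  · obtain ⟨x', hx', hfx'⟩ := Hf x hx hfx
    obtain ⟨y', hy', hyS', hgy'⟩ := Hgs y hy hyS hgy
    refine ⟨⟨(x', y'), ⟨?_, (hS (x', y')).2 (Or.inr hyS')⟩, ?_⟩, hud⟩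
    · exact aux_sum hb hx' hy' (norm_nonneg _) (norm_nonneg _)
    · simp [hfx', hgy']

theorem product_of_nice_is_nice (m p n k : ℕ) (hmp : p ≤ m) (hp : 0 < p)
    (hnk : k ≤ n) (hk : 0 < k)
    (f : EuclideanSpace ℝ (Fin m) → EuclideanSpace ℝ (Fin p))
    (g : EuclideanSpace ℝ (Fin n) → EuclideanSpace ℝ (Fin k))
    (hf : AnalyticOnNhd ℝ f univ) (hg : AnalyticOnNhd ℝ g univ)
    (hf0 : f 0 = 0) (hg0 : g 0 = 0)
    (hfnice : IsNice f) (hgnice : IsNice g) :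
    IsNiceProd (fun q => (f q.1, g q.2)) := by
  obtain ⟨ρf, hρf, Hf⟩ := hfnice
  obtain ⟨ρg, hρg, Hg⟩ := hgnice
  have hfd : ∀ x, DifferentiableAt ℝ f x := fun x => (hf x (mem_univ x)).differentiableAt
  have hgd : ∀ y, DifferentiableAt ℝ g y := fun y => (hg y (mem_univ y)).differentiableAt
  have hS := singSet_prod hfd hgd (f := f) (g := g)
  refine ⟨min ρf ρg, lt_min hρf hρg, ?_⟩
  intro ε ε' hε hερ hε' hε'ρ
  have hερf : ε < ρf := lt_of_lt_of_le hερ (min_le_left _ _)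
  have hερg : ε < ρg := lt_of_lt_of_le hερ (min_le_right _ _)
  have hε'ρf : ε' < ρf := lt_of_lt_of_le hε'ρ (min_le_left _ _)
  have hε'ρg : ε' < ρg := lt_of_lt_of_le hε'ρ (min_le_right _ _)
  have h2ε : 0 < ε / Real.sqrt 2 := aux_half_pos hε
  have h2ε' : 0 < ε' / Real.sqrt 2 := aux_half_pos hε'
  obtain ⟨δ₁, hδ₁, hf₁, hfs₁⟩ := Hf ε (ε' / Real.sqrt 2) hε hερf h2ε'
    (lt_trans (aux_half_lt hε') hε'ρf)
  obtain ⟨δ₂, hδ₂, hf₂, hfs₂⟩ := Hf ε' (ε / Real.sqrt 2) hε' hε'ρf h2ε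
    (lt_trans (aux_half_lt hε) hερf)
  obtain ⟨δ₃, hδ₃, hg₃, hgs₃⟩ := Hg ε (ε' / Real.sqrt 2) hε hερg h2ε'
    (lt_trans (aux_half_lt hε') hε'ρg)
  obtain ⟨δ₄, hδ₄, hg₄, hgs₄⟩ := Hg ε' (ε / Real.sqrt 2) hε' hε'ρg h2ε
    (lt_trans (aux_half_lt hε) hερg)
  set δ := min (min δ₁ δ₂) (min δ₃ δ₄) with hδdef
  have hδ : 0 < δ := lt_min (lt_min hδ₁ hδ₂) (lt_min hδ₃ hδ₄)
  have hδδ₁ : δ ≤ δ₁ := le_trans (min_le_left _ _) (min_le_left _ _)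
  have hδδ₂ : δ ≤ δ₂ := le_trans (min_le_left _ _) (min_le_right _ _)
  have hδδ₃ : δ ≤ δ₃ := le_trans (min_le_right _ _) (min_le_left _ _)
  have hδδ₄ : δ ≤ δ₄ := le_trans (min_le_right _ _) (min_le_right _ _)
  -- preimage-finding statements extracted from the niceness data
  have Pf₁ : ∀ x : EuclideanSpace ℝ (Fin m), ‖x‖ < ε → ‖f x‖ < δ →
      ∃ x', ‖x'‖ < ε' / Real.sqrt 2 ∧ f x' = f x := by
    intro x hx hfx
    obtain ⟨x', hx', hfx'⟩ := aux_pull hf₁ ⟨x, mem_ball_zero_iff.2 hx, rfl⟩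
      (mem_ball_zero_iff.2 (lt_of_lt_of_le hfx hδδ₁))
    exact ⟨x', mem_ball_zero_iff.1 hx', hfx'⟩
  have Pf₂ : ∀ x : EuclideanSpace ℝ (Fin m), ‖x‖ < ε' → ‖f x‖ < δ →
      ∃ x', ‖x'‖ < ε / Real.sqrt 2 ∧ f x' = f x := by
    intro x hx hfx
    obtain ⟨x', hx', hfx'⟩ := aux_pull hf₂ ⟨x, mem_ball_zero_iff.2 hx, rfl⟩
      (mem_ball_zero_iff.2 (lt_of_lt_of_le hfx hδδ₂))
    exact ⟨x', mem_ball_zero_iff.1 hx', hfx'⟩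
  have Pg₃ : ∀ y : EuclideanSpace ℝ (Fin n), ‖y‖ < ε → ‖g y‖ < δ →
      ∃ y', ‖y'‖ < ε' / Real.sqrt 2 ∧ g y' = g y := by
    intro y hy hgy
    obtain ⟨y', hy', hgy'⟩ := aux_pull hg₃ ⟨y, mem_ball_zero_iff.2 hy, rfl⟩
      (mem_ball_zero_iff.2 (lt_of_lt_of_le hgy hδδ₃))
    exact ⟨y', mem_ball_zero_iff.1 hy', hgy'⟩
  have Pg₄ : ∀ y : EuclideanSpace ℝ (Fin n), ‖y‖ < ε' → ‖g y‖ < δ →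
      ∃ y', ‖y'‖ < ε / Real.sqrt 2 ∧ g y' = g y := by
    intro y hy hgy
    obtain ⟨y', hy', hgy'⟩ := aux_pull hg₄ ⟨y, mem_ball_zero_iff.2 hy, rfl⟩
      (mem_ball_zero_iff.2 (lt_of_lt_of_le hgy hδδ₄))
    exact ⟨y', mem_ball_zero_iff.1 hy', hgy'⟩
  have Pfs₁ : ∀ x : EuclideanSpace ℝ (Fin m), ‖x‖ < ε → x ∈ singSet f → ‖f x‖ < δ →
      ∃ x', ‖x'‖ < ε' / Real.sqrt 2 ∧ x' ∈ singSet f ∧ f x' = f x := by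
    intro x hx hxS hfx
    obtain ⟨x', hx', hfx'⟩ := aux_pull hfs₁ ⟨x, ⟨mem_ball_zero_iff.2 hx, hxS⟩, rfl⟩
      (mem_ball_zero_iff.2 (lt_of_lt_of_le hfx hδδ₁))
    exact ⟨x', mem_ball_zero_iff.1 hx'.1, hx'.2, hfx'⟩
  have Pfs₂ : ∀ x : EuclideanSpace ℝ (Fin m), ‖x‖ < ε' → x ∈ singSet f → ‖f x‖ < δ →
      ∃ x', ‖x'‖ < ε / Real.sqrt 2 ∧ x' ∈ singSet f ∧ f x' = f x := by
    intro x hx hxS hfx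
    obtain ⟨x', hx', hfx'⟩ := aux_pull hfs₂ ⟨x, ⟨mem_ball_zero_iff.2 hx, hxS⟩, rfl⟩
      (mem_ball_zero_iff.2 (lt_of_lt_of_le hfx hδδ₂))
    exact ⟨x', mem_ball_zero_iff.1 hx'.1, hx'.2, hfx'⟩
  have Pgs₃ : ∀ y : EuclideanSpace ℝ (Fin n), ‖y‖ < ε → y ∈ singSet g → ‖g y‖ < δ →
      ∃ y', ‖y'‖ < ε' / Real.sqrt 2 ∧ y' ∈ singSet g ∧ g y' = g y := by
    intro y hy hyS hgy
    obtain ⟨y', hy', hgy'⟩ := aux_pull hgs₃ ⟨y, ⟨mem_ball_zero_iff.2 hy, hyS⟩, rfl⟩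
      (mem_ball_zero_iff.2 (lt_of_lt_of_le hgy hδδ₃))
    exact ⟨y', mem_ball_zero_iff.1 hy'.1, hy'.2, hgy'⟩
  have Pgs₄ : ∀ y : EuclideanSpace ℝ (Fin n), ‖y‖ < ε' → y ∈ singSet g → ‖g y‖ < δ →
      ∃ y', ‖y'‖ < ε / Real.sqrt 2 ∧ y' ∈ singSet g ∧ g y' = g y := by
    intro y hy hyS hgy
    obtain ⟨y', hy', hgy'⟩ := aux_pull hgs₄ ⟨y, ⟨mem_ball_zero_iff.2 hy, hyS⟩, rfl⟩
      (mem_ball_zero_iff.2 (lt_of_lt_of_le hgy hδδ₄))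
    exact ⟨y', mem_ball_zero_iff.1 hy'.1, hy'.2, hgy'⟩
  refine ⟨δ, hδ, ?_, ?_⟩
  · exact Subset.antisymm (incl_plain hε hδ hε' Pf₁ Pg₃) (incl_plain hε' hδ hε Pf₂ Pg₄)
  · exact Subset.antisymm (incl_sing hS hε hδ hε' Pf₁ Pg₃ Pfs₁ Pgs₃)
      (incl_sing hS hε' hδ hε Pf₂ Pg₄ Pfs₂ Pgs₄)
end
end

section
/- Let f : ℝ^m → ℝ^p, m ≥ p > 0, be a real-analytic map with f(0)=0, and let G : ℝ^m × ℝⁿ → ℝ^p × ℝⁿ be given by G(x,y) = (f(x), y). Then f satisfies condition (⋆) if and only if G satisfies condition (⋆); that is, [there exists ε₀>0 with closure(M(f) \ f⁻¹(Disc f)) ∩ f⁻¹(0) ∩ B_{ε₀} ⊆ {0}] holds if and only if [there exists ε₀>0 with closure(M(G) \ G⁻¹(Disc G)) ∩ G⁻¹(0) ∩ B_{ε₀} ⊆ {(0,0)}] holds. -/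
open Metric Set Function

noncomputable section

/-- The discriminant of a map between real normed spaces. -/
def discSet {E F : Type*} [NormedAddCommGroup E] [NormedSpace ℝ E]
    [NormedAddCommGroup F] [NormedSpace ℝ F] (G : E → F) : Set F :=
  closure (G '' singSet G) ∪ (closure (range G) \ interior (range G))

/-- The Milnor set of `f : ℝ^m → ℝ^p`. -/
def milnorSet {m p : ℕ} (f : EuclideanSpace ℝ (Fin m) → EuclideanSpace ℝ (Fin p)) :
    Set (EuclideanSpace ℝ (Fin m)) :=
  {x | ¬ Function.Surjective
    (fun v : EuclideanSpace ℝ (Fin m) => (fderiv ℝ f x v, (inner ℝ x v : ℝ)))}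

/-- The Milnor set of a map on a product, with the product inner product
`⟨(x,y),(v,w)⟩ = ⟨x,v⟩ + ⟨y,w⟩`. -/
def milnorSetProd {m n p k : ℕ}
    (G : EuclideanSpace ℝ (Fin m) × EuclideanSpace ℝ (Fin n) →
         EuclideanSpace ℝ (Fin p) × EuclideanSpace ℝ (Fin k)) :
    Set (EuclideanSpace ℝ (Fin m) × EuclideanSpace ℝ (Fin n)) :=
  {q | ¬ Function.Surjective
    (fun v : EuclideanSpace ℝ (Fin m) × EuclideanSpace ℝ (Fin n) =>
      (fderiv ℝ G q v, ((inner ℝ q.1 v.1 : ℝ) + (inner ℝ q.2 v.2 : ℝ))))}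

/-!
Since `G = f × id`, every object entering condition (⋆) for `G` splits off the `ℝⁿ` factor:
`DG(x,y) = Df(x) × id`, so `Sing G = Sing f × ℝⁿ` and `Disc G = Disc f × ℝⁿ`, and in the Milnor
condition the free `w`-component absorbs `⟨y,w⟩`, so `M(G) = M(f) × ℝⁿ`. Hence the set in
condition (⋆) for `G` is the corresponding set for `f` times `{0}`, and on `ℝ^m × {0}` the ball
`B_ε` is just the ball of `ℝ^m`.
-/

theorem prod_univ_sdiff_prod_univ {α β : Type*} (s t : Set α) :
    s ×ˢ (univ : Set β) \ t ×ˢ univ = (s \ t) ×ˢ univ := by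
  rw [prod_sdiff_prod, sdiff_self, prod_empty, empty_union]

section ProdMapId

variable {E F K : Type*} [NormedAddCommGroup E] [NormedSpace ℝ E]
  [NormedAddCommGroup F] [NormedSpace ℝ F] [NormedAddCommGroup K] [NormedSpace ℝ K]

theorem fderiv_prodMap_id {f : E → F} {x : E × K} (hf : DifferentiableAt ℝ f x.1) :
    fderiv ℝ (Prod.map f id) x = (fderiv ℝ f x.1).prodMap (ContinuousLinearMap.id ℝ K) :=
  (hf.hasFDerivAt.prodMap x (hasFDerivAt_id x.2)).fderiv

theorem singSet_prodMap_id {f : E → F} (hf : Differentiable ℝ f) :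
    singSet (Prod.map f (id : K → K)) = singSet f ×ˢ univ := by
  ext x
  simp [singSet, fderiv_prodMap_id (hf x.1), Prod.map_surjective, surjective_id]

theorem discSet_prodMap_id {f : E → F} (hf : Differentiable ℝ f) :
    discSet (Prod.map f (id : K → K)) = discSet f ×ˢ univ := by
  rw [discSet, discSet, singSet_prodMap_id hf, prodMap_image_prod, range_prodMap, image_univ,
    range_id, closure_prod_eq, closure_prod_eq, interior_prod_eq, closure_univ, interior_univ,
    prod_univ_sdiff_prod_univ, union_prod]

end ProdMapId

theorem surjective_prodMap_id_inner_iff {E F K : Type*} [NormedAddCommGroup E]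
    [InnerProductSpace ℝ E] [NormedAddCommGroup K] [InnerProductSpace ℝ K]
    (g : E → F) (x : E) (y : K) :
    Surjective (fun v : E × K => ((g v.1, v.2), inner ℝ x v.1 + inner ℝ y v.2)) ↔
      Surjective (fun v : E => (g v, inner ℝ x v)) := by
  constructor
  · rintro h ⟨a, c⟩
    obtain ⟨⟨v, w⟩, hv⟩ := h ((a, 0), c)
    simp only [Prod.mk.injEq] at hv
    obtain ⟨⟨rfl, rfl⟩, rfl⟩ := hv
    exact ⟨v, by simp⟩
  · rintro h ⟨⟨a, b⟩, c⟩
    obtain ⟨v, hv⟩ := h (a, c - inner ℝ y b)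
    simp only [Prod.mk.injEq] at hv
    exact ⟨(v, b), by simp [hv]⟩

theorem milnorSetProd_prodMap_id {m n p : ℕ}
    {f : EuclideanSpace ℝ (Fin m) → EuclideanSpace ℝ (Fin p)} (hf : Differentiable ℝ f) :
    milnorSetProd (Prod.map f (id : EuclideanSpace ℝ (Fin n) → _)) = milnorSet f ×ˢ univ := by
  ext x
  simp only [milnorSetProd, milnorSet, mem_ofPred_eq, mem_prod, mem_univ, and_true,
    fderiv_prodMap_id (hf x.1)]
  exact (surjective_prodMap_id_inner_iff _ _ _).not

theorem mk_zero_mem_pball_iff {E F : Type*} [NormedAddCommGroup E] [NormedAddCommGroup F]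
    {x : E} {ε : ℝ} (hε : 0 ≤ ε) : (x, (0 : F)) ∈ pball ε ↔ ‖x‖ < ε := by
  simp [pball, pow_lt_pow_iff_left₀ (norm_nonneg x) hε two_ne_zero]

theorem exists_prod_zero_inter_pball_subset_iff {E F : Type*} [NormedAddCommGroup E]
    [NormedAddCommGroup F] (s : Set E) :
    (∃ ε > (0 : ℝ), s ×ˢ ({0} : Set F) ∩ pball ε ⊆ {(0, 0)}) ↔
      ∃ ε > (0 : ℝ), s ∩ ball 0 ε ⊆ {0} := by
  refine exists_congr fun ε => and_congr_right fun hε => ⟨fun h x ⟨hx, hxε⟩ => ?_, ?_⟩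
  · have := h ⟨⟨hx, mem_singleton _⟩, (mk_zero_mem_pball_iff hε.le).2 (mem_ball_zero_iff.1 hxε)⟩
    exact (Prod.mk.inj this).1
  · rintro h ⟨x, y⟩ ⟨⟨hx, rfl : y = 0⟩, hxε⟩
    obtain rfl : x = 0 := h ⟨hx, mem_ball_zero_iff.2 ((mk_zero_mem_pball_iff hε.le).1 hxε)⟩
    rfl

theorem condition_star_iff_for_product_with_identity_general (m p n : ℕ)
    (f : EuclideanSpace ℝ (Fin m) → EuclideanSpace ℝ (Fin p))
    (hf : AnalyticOnNhd ℝ f univ) :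
    (∃ ε₀ > (0 : ℝ),
        closure (milnorSet f \ f ⁻¹' discSet f) ∩ f ⁻¹' {0} ∩ ball 0 ε₀ ⊆ {0}) ↔
    (∃ ε₀ > (0 : ℝ),
        closure
            (milnorSetProd
                (fun q : EuclideanSpace ℝ (Fin m) × EuclideanSpace ℝ (Fin n) =>
                  (f q.1, q.2)) \
              (fun q : EuclideanSpace ℝ (Fin m) × EuclideanSpace ℝ (Fin n) =>
                  (f q.1, q.2)) ⁻¹'
                discSet (fun q : EuclideanSpace ℝ (Fin m) × EuclideanSpace ℝ (Fin n) =>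
                  (f q.1, q.2))) ∩
          (fun q : EuclideanSpace ℝ (Fin m) × EuclideanSpace ℝ (Fin n) =>
              (f q.1, q.2)) ⁻¹' {(0, 0)} ∩
          pball ε₀ ⊆ {(0, 0)}) := by
  have hfd : Differentiable ℝ f := fun x => (hf x trivial).differentiableAt
  have hG : (fun q : EuclideanSpace ℝ (Fin m) × EuclideanSpace ℝ (Fin n) => (f q.1, q.2)) =
      Prod.map f id := rfl
  rw [hG, milnorSetProd_prodMap_id hfd, discSet_prodMap_id hfd, preimage_prod_map_prod,
    preimage_id, prod_univ_sdiff_prod_univ, closure_prod_eq, closure_univ,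
    ← singleton_prod_singleton, preimage_prod_map_prod, preimage_id, prod_inter_prod, univ_inter,
    exists_prod_zero_inter_pball_subset_iff]

theorem condition_star_iff_for_product_with_identity (m p n : ℕ) (hmp : p ≤ m) (hp : 0 < p)
    (f : EuclideanSpace ℝ (Fin m) → EuclideanSpace ℝ (Fin p))
    (hf : AnalyticOnNhd ℝ f univ) (hf0 : f 0 = 0) :
    (∃ ε₀ > (0 : ℝ),
        closure (milnorSet f \ f ⁻¹' discSet f) ∩ f ⁻¹' {0} ∩ ball 0 ε₀ ⊆ {0}) ↔
    (∃ ε₀ > (0 : ℝ),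
        closure
            (milnorSetProd
                (fun q : EuclideanSpace ℝ (Fin m) × EuclideanSpace ℝ (Fin n) =>
                  (f q.1, q.2)) \
              (fun q : EuclideanSpace ℝ (Fin m) × EuclideanSpace ℝ (Fin n) =>
                  (f q.1, q.2)) ⁻¹'
                discSet (fun q : EuclideanSpace ℝ (Fin m) × EuclideanSpace ℝ (Fin n) =>
                  (f q.1, q.2))) ∩
          (fun q : EuclideanSpace ℝ (Fin m) × EuclideanSpace ℝ (Fin n) =>
              (f q.1, q.2)) ⁻¹' {(0, 0)} ∩
          pball ε₀ ⊆ {(0, 0)}) :=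
  condition_star_iff_for_product_with_identity_general m p n f hf
end
end
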